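/- Let φ ∈ C^∞(ℂ, ℝ) with ∂²φ/∂z∂z̄ ≥ c everywhere for some constant c > 0. Then for every f ∈ C_c^∞(ℂ): ∫_ℂ |−∂f/∂z + (∂φ/∂z) f|² dm ≥ 2c ∫_ℂ |f|² dm. -/

import Mathlib

open MeasureTheory

/-- Wirtinger derivative `∂g/∂z = (∂g/∂x − i ∂g/∂y)/2` of `g : ℂ → ℂ`. -/
noncomputable def wDz (g : ℂ → ℂ) (z : ℂ) : ℂ :=
  (fderiv ℝ g z 1 - Complex.I * fderiv ℝ g z Complex.I) / 2

/-- Conjugate Wirtinger derivative `∂g/∂z̄ = (∂g/∂x + i ∂g/∂y)/2` of `g : ℂ → ℂ`. -/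
noncomputable def wDzbar (g : ℂ → ℂ) (z : ℂ) : ℂ :=
  (fderiv ℝ g z 1 + Complex.I * fderiv ℝ g z Complex.I) / 2

section Toolbox

lemma contDiff_fderiv_apply {g : ℂ → ℂ} (hg : ContDiff ℝ (⊤ : ℕ∞) g) (v : ℂ) :
    ContDiff ℝ (⊤ : ℕ∞) (fun z => fderiv ℝ g z v) :=
  (hg.fderiv_right (by simp)).clm_apply contDiff_const

lemma contDiff_wDz {g : ℂ → ℂ} (hg : ContDiff ℝ (⊤ : ℕ∞) g) : ContDiff ℝ (⊤ : ℕ∞) (wDz g) := by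
  unfold wDz
  exact ((contDiff_fderiv_apply hg 1).sub
    (contDiff_const.mul (contDiff_fderiv_apply hg Complex.I))).div_const 2

lemma contDiff_wDzbar {g : ℂ → ℂ} (hg : ContDiff ℝ (⊤ : ℕ∞) g) : ContDiff ℝ (⊤ : ℕ∞) (wDzbar g) := by
  unfold wDzbar
  exact ((contDiff_fderiv_apply hg 1).add
    (contDiff_const.mul (contDiff_fderiv_apply hg Complex.I))).div_const 2

lemma wDz_mul {g h : ℂ → ℂ} {z : ℂ} (hg : DifferentiableAt ℝ g z)
    (hh : DifferentiableAt ℝ h z) :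
    wDz (fun w => g w * h w) z = wDz g z * h z + g z * wDz h z := by
  unfold wDz
  rw [fderiv_fun_mul hg hh]
  simp only [ContinuousLinearMap.add_apply, ContinuousLinearMap.smul_apply, smul_eq_mul]
  ring

lemma wDzbar_mul {g h : ℂ → ℂ} {z : ℂ} (hg : DifferentiableAt ℝ g z)
    (hh : DifferentiableAt ℝ h z) :
    wDzbar (fun w => g w * h w) z = wDzbar g z * h z + g z * wDzbar h z := by
  unfold wDzbar
  rw [fderiv_fun_mul hg hh]
  simp only [ContinuousLinearMap.add_apply, ContinuousLinearMap.smul_apply, smul_eq_mul]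
  ring

lemma wDz_conj {g : ℂ → ℂ} {z : ℂ} :
    wDz (fun w => (starRingEnd ℂ) (g w)) z = (starRingEnd ℂ) (wDzbar g z) := by
  unfold wDz wDzbar
  have h : (fun w => (starRingEnd ℂ) (g w)) = ⇑Complex.conjCLE ∘ g := rfl
  rw [h, ContinuousLinearEquiv.comp_fderiv]
  simp only [ContinuousLinearMap.coe_comp', Function.comp_apply]
  simp only [ContinuousLinearEquiv.coe_coe, Complex.conjCLE_apply, map_div₀, map_add, map_mul,
    Complex.conj_I, map_ofNat]
  ring

lemma wDzbar_conj {g : ℂ → ℂ} {z : ℂ} :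
    wDzbar (fun w => (starRingEnd ℂ) (g w)) z = (starRingEnd ℂ) (wDz g z) := by
  unfold wDz wDzbar
  have h : (fun w => (starRingEnd ℂ) (g w)) = ⇑Complex.conjCLE ∘ g := rfl
  rw [h, ContinuousLinearEquiv.comp_fderiv]
  simp only [ContinuousLinearMap.coe_comp', Function.comp_apply]
  simp only [ContinuousLinearEquiv.coe_coe, Complex.conjCLE_apply, map_div₀, map_sub, map_mul,
    Complex.conj_I, map_ofNat]
  ring

lemma conj_wDz_real {φ : ℂ → ℝ} (hφ : ContDiff ℝ (⊤ : ℕ∞) φ) (z : ℂ) :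
    (starRingEnd ℂ) (wDz (fun w => ((φ w : ℝ) : ℂ)) z) = wDzbar (fun w => ((φ w : ℝ) : ℂ)) z := by
  have h : (fun w => ((φ w : ℝ) : ℂ)) = ⇑Complex.ofRealCLM ∘ φ := rfl
  have hd : ∀ v : ℂ, fderiv ℝ (fun w => ((φ w : ℝ) : ℂ)) z v = ((fderiv ℝ φ z v : ℝ) : ℂ) := by
    intro v
    rw [h, fderiv_comp z Complex.ofRealCLM.differentiableAt (hφ.differentiable (by simp) z)]
    simp [ContinuousLinearMap.fderiv]
  unfold wDz wDzbar
  rw [hd 1, hd Complex.I]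
  simp only [map_div₀, map_sub, map_mul, Complex.conj_I, Complex.conj_ofReal, map_ofNat]
  ring

lemma fderiv_fderiv_symm {g : ℂ → ℂ} (hg : ContDiff ℝ (⊤ : ℕ∞) g) (z v w : ℂ) :
    fderiv ℝ (fun x => fderiv ℝ g x w) z v = fderiv ℝ (fun x => fderiv ℝ g x v) z w := by
  have hdg : ContDiff ℝ (⊤ : ℕ∞) (fderiv ℝ g) := hg.fderiv_right (by simp)
  have key : ∀ u : ℂ, fderiv ℝ (fun x => fderiv ℝ g x u) z
      = (fderiv ℝ (fderiv ℝ g) z).flip u := by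
    intro u
    rw [fderiv_clm_apply (hdg.differentiable (by simp) z) (differentiableAt_const u)]
    simp
  rw [key w, key v]
  simp only [ContinuousLinearMap.flip_apply]
  exact second_derivative_symmetric (fun y => (hg.differentiable (by simp) y).hasFDerivAt)
    ((hdg.differentiable (by simp) z).hasFDerivAt) v w

lemma fderiv_wDz_apply {g : ℂ → ℂ} (hg : ContDiff ℝ (⊤ : ℕ∞) g) (z v : ℂ) :
    fderiv ℝ (wDz g) z v = (fderiv ℝ (fun x => fderiv ℝ g x 1) z v
      - Complex.I * fderiv ℝ (fun x => fderiv ℝ g x Complex.I) z v) / 2 := by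
  have h1 : DifferentiableAt ℝ (fun x => fderiv ℝ g x 1) z :=
    ((contDiff_fderiv_apply hg 1).differentiable (by simp) z)
  have hI : DifferentiableAt ℝ (fun x => fderiv ℝ g x Complex.I) z :=
    ((contDiff_fderiv_apply hg Complex.I).differentiable (by simp) z)
  have h : wDz g = fun x => (fderiv ℝ g x 1 - Complex.I * fderiv ℝ g x Complex.I) / 2 := rfl
  rw [h]
  simp_rw [div_eq_inv_mul]
  rw [fderiv_const_mul (a := fun x => fderiv ℝ g x 1 - Complex.I * fderiv ℝ g x Complex.I)
      (h1.sub (hI.const_mul _)), fderiv_fun_sub h1 (hI.const_mul _),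
    fderiv_const_mul hI]
  simp [mul_sub]

lemma fderiv_wDzbar_apply {g : ℂ → ℂ} (hg : ContDiff ℝ (⊤ : ℕ∞) g) (z v : ℂ) :
    fderiv ℝ (wDzbar g) z v = (fderiv ℝ (fun x => fderiv ℝ g x 1) z v
      + Complex.I * fderiv ℝ (fun x => fderiv ℝ g x Complex.I) z v) / 2 := by
  have h1 : DifferentiableAt ℝ (fun x => fderiv ℝ g x 1) z :=
    ((contDiff_fderiv_apply hg 1).differentiable (by simp) z)
  have hI : DifferentiableAt ℝ (fun x => fderiv ℝ g x Complex.I) z :=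
    ((contDiff_fderiv_apply hg Complex.I).differentiable (by simp) z)
  have h : wDzbar g = fun x => (fderiv ℝ g x 1 + Complex.I * fderiv ℝ g x Complex.I) / 2 := rfl
  rw [h]
  simp_rw [div_eq_inv_mul]
  rw [fderiv_const_mul (a := fun x => fderiv ℝ g x 1 + Complex.I * fderiv ℝ g x Complex.I)
      (h1.add (hI.const_mul _)), fderiv_fun_add h1 (hI.const_mul _),
    fderiv_const_mul hI]
  simp [mul_add]

lemma wDzbar_wDz_comm {g : ℂ → ℂ} (hg : ContDiff ℝ (⊤ : ℕ∞) g) (z : ℂ) :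
    wDzbar (wDz g) z = wDz (wDzbar g) z := by
  show (fderiv ℝ (wDz g) z 1 + Complex.I * fderiv ℝ (wDz g) z Complex.I) / 2
    = (fderiv ℝ (wDzbar g) z 1 - Complex.I * fderiv ℝ (wDzbar g) z Complex.I) / 2
  rw [fderiv_wDz_apply hg, fderiv_wDz_apply hg, fderiv_wDzbar_apply hg, fderiv_wDzbar_apply hg,
    fderiv_fderiv_symm hg z Complex.I 1]
  ring

lemma hcs_fderiv_apply {g : ℂ → ℂ} (hs : HasCompactSupport g) (v : ℂ) :
    HasCompactSupport (fun z => fderiv ℝ g z v) :=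
  (hs.fderiv ℝ).comp_left (g := fun L : ℂ →L[ℝ] ℂ => L v) rfl

lemma hcs_wDz {g : ℂ → ℂ} (hs : HasCompactSupport g) : HasCompactSupport (wDz g) := by
  apply (hs.fderiv ℝ).mono
  intro z hz
  simp only [Function.mem_support] at hz ⊢
  intro h0
  apply hz
  unfold wDz
  rw [h0]
  simp

lemma hcs_wDzbar {g : ℂ → ℂ} (hs : HasCompactSupport g) : HasCompactSupport (wDzbar g) := by
  apply (hs.fderiv ℝ).mono
  intro z hz
  simp only [Function.mem_support] at hz ⊢
  intro h0
  apply hz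
  unfold wDzbar
  rw [h0]
  simp

lemma integral_fderiv_apply_eq_zero {u : ℂ → ℂ} (hu : ContDiff ℝ (⊤ : ℕ∞) u)
    (hs : HasCompactSupport u) (v : ℂ) : ∫ z : ℂ, fderiv ℝ u z v ∂volume = 0 := by
  have h := integral_mul_fderiv_eq_neg_fderiv_mul_of_integrable (μ := volume)
    (f := u) (g := fun _ : ℂ => (1 : ℂ)) (v := v)
    ?_ ?_ ?_ (fun x _ => hu.differentiable (by simp) x) (fun x _ => differentiable_const (1 : ℂ) x)
  · simp only [fderiv_fun_const, Pi.zero_apply, ContinuousLinearMap.zero_apply, mul_zero,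
      mul_one, integral_zero] at h
    rw [eq_comm, neg_eq_zero] at h
    exact h
  · exact ((contDiff_fderiv_apply hu v).continuous.mul
      continuous_const).integrable_of_hasCompactSupport ((hcs_fderiv_apply hs v).mul_right)
  · simp only [fderiv_fun_const, Pi.zero_apply, ContinuousLinearMap.zero_apply, mul_zero]
    exact integrable_zero _ _ _
  · exact (hu.continuous.mul continuous_const).integrable_of_hasCompactSupport hs.mul_right

lemma integral_wDz_eq_zero {u : ℂ → ℂ} (hu : ContDiff ℝ (⊤ : ℕ∞) u)
    (hs : HasCompactSupport u) : ∫ z : ℂ, wDz u z ∂volume = 0 := by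
  unfold wDz
  have i1 : Integrable (fun z : ℂ => fderiv ℝ u z 1) volume :=
    (contDiff_fderiv_apply hu 1).continuous.integrable_of_hasCompactSupport
      (hcs_fderiv_apply hs 1)
  have iI : Integrable (fun z : ℂ => Complex.I * fderiv ℝ u z Complex.I) volume :=
    (continuous_const.mul
      (contDiff_fderiv_apply hu Complex.I).continuous).integrable_of_hasCompactSupport
      ((hcs_fderiv_apply hs Complex.I).comp_left (g := fun x : ℂ => Complex.I * x) (mul_zero _))
  simp_rw [div_eq_inv_mul]
  rw [integral_const_mul, integral_sub i1 iI, integral_const_mul,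
    integral_fderiv_apply_eq_zero hu hs, integral_fderiv_apply_eq_zero hu hs]
  simp

lemma integral_wDzbar_eq_zero {u : ℂ → ℂ} (hu : ContDiff ℝ (⊤ : ℕ∞) u)
    (hs : HasCompactSupport u) : ∫ z : ℂ, wDzbar u z ∂volume = 0 := by
  unfold wDzbar
  have i1 : Integrable (fun z : ℂ => fderiv ℝ u z 1) volume :=
    (contDiff_fderiv_apply hu 1).continuous.integrable_of_hasCompactSupport
      (hcs_fderiv_apply hs 1)
  have iI : Integrable (fun z : ℂ => Complex.I * fderiv ℝ u z Complex.I) volume :=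
    (continuous_const.mul
      (contDiff_fderiv_apply hu Complex.I).continuous).integrable_of_hasCompactSupport
      ((hcs_fderiv_apply hs Complex.I).comp_left (g := fun x : ℂ => Complex.I * x) (mul_zero _))
  simp_rw [div_eq_inv_mul]
  rw [integral_const_mul, integral_add i1 iI, integral_const_mul,
    integral_fderiv_apply_eq_zero hu hs, integral_fderiv_apply_eq_zero hu hs]
  simp

lemma key_alg (a b u p r : ℂ) :
    ‖-a + p * u‖ ^ 2 = ‖b + (starRingEnd ℂ) p * u‖ ^ 2
      + (a * (starRingEnd ℂ) a - b * (starRingEnd ℂ) b).re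
      - 2 * (r * (u * (starRingEnd ℂ) u)
          + (starRingEnd ℂ) p * (a * (starRingEnd ℂ) u + u * (starRingEnd ℂ) b)).re
      + 2 * (r.re * ‖u‖ ^ 2) := by
  have hn : ∀ x : ℂ, ‖x‖ ^ 2 = x.re ^ 2 + x.im ^ 2 := by
    intro x
    rw [Complex.sq_norm, Complex.normSq_apply]
    ring
  simp only [hn, Complex.add_re, Complex.add_im, Complex.mul_re, Complex.mul_im, Complex.sub_re,
    Complex.neg_re, Complex.neg_im, Complex.conj_re, Complex.conj_im]
  ring

lemma hcs_mul_left' {β : Type*} [MulZeroClass β] [TopologicalSpace β]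
    {g h : ℂ → β} (hs : HasCompactSupport h) : HasCompactSupport (fun z => g z * h z) := by
  apply hs.mono
  intro z hz
  simp only [Function.mem_support] at hz ⊢
  intro h0
  exact hz (by simp [h0])

lemma norm_sq_complex (x : ℂ) : ‖x‖ ^ 2 = x.re ^ 2 + x.im ^ 2 := by
  rw [Complex.sq_norm, Complex.normSq_apply]
  ring

end Toolbox

set_option maxHeartbeats 2000000 in
/-- if `φ ∈ C^∞(ℂ, ℝ)` has `∂²φ/∂z∂z̄ ≥ c` everywhere (`c > 0`), then for
every `f ∈ C_c^∞(ℂ)` one has `∫ |−∂f/∂z + (∂φ/∂z) f|² dm ≥ 2c ∫ |f|² dm`. -/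
theorem stmt5 (φ : ℂ → ℝ) (hφ : ContDiff ℝ (⊤ : ℕ∞) φ) (c : ℝ) (hc : 0 < c)
    (hcurv : ∀ z : ℂ, c ≤ (wDz (wDzbar (fun w => ((φ w : ℝ) : ℂ))) z).re)
    (f : ℂ → ℂ) (hf : ContDiff ℝ (⊤ : ℕ∞) f) (hsupp : HasCompactSupport f) :
    2 * c * ∫ z : ℂ, ‖f z‖ ^ 2 ∂volume
      ≤ ∫ z : ℂ, ‖-wDz f z + wDz (fun w => ((φ w : ℝ) : ℂ)) z * f z‖ ^ 2 ∂volume := by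
  set Φ : ℂ → ℂ := fun w => ((φ w : ℝ) : ℂ) with hΦdef
  have hΦ : ContDiff ℝ (⊤ : ℕ∞) Φ := Complex.ofRealCLM.contDiff.comp hφ
  set p : ℂ → ℂ := wDz Φ with hpdef
  set q : ℂ → ℂ := wDzbar Φ with hqdef
  set r : ℂ → ℂ := wDz q with hrdef
  have hq : ContDiff ℝ (⊤ : ℕ∞) q := contDiff_wDzbar hΦ
  have hr : ContDiff ℝ (⊤ : ℕ∞) r := contDiff_wDz hq
  have hfc : ContDiff ℝ (⊤ : ℕ∞) (fun w => (starRingEnd ℂ) (f w)) := Complex.conjCLE.contDiff.comp hf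
  have hfcs : HasCompactSupport (fun w => (starRingEnd ℂ) (f w)) :=
    hsupp.comp_left (map_zero _)
  have hqp : ∀ z : ℂ, q z = (starRingEnd ℂ) (p z) := by
    intro z
    have h := conj_wDz_real hφ z
    rw [← hΦdef] at h
    rw [← hpdef, ← hqdef] at h
    exact h.symm
  -- the three auxiliary functions
  have hin1 : ContDiff ℝ (⊤ : ℕ∞) (fun w => q w * (f w * (starRingEnd ℂ) (f w))) :=
    hq.mul (hf.mul hfc)
  have hcs1 : HasCompactSupport (fun w => q w * (f w * (starRingEnd ℂ) (f w))) :=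
    hcs_mul_left' (hcs_mul_left' hfcs)
  have hin2 : ContDiff ℝ (⊤ : ℕ∞) (fun w => wDz f w * (starRingEnd ℂ) (f w)) :=
    (contDiff_wDz hf).mul hfc
  have hcs2 : HasCompactSupport (fun w => wDz f w * (starRingEnd ℂ) (f w)) :=
    hcs_mul_left' hfcs
  have hin3 : ContDiff ℝ (⊤ : ℕ∞) (fun w => wDzbar f w * (starRingEnd ℂ) (f w)) :=
    (contDiff_wDzbar hf).mul hfc
  have hcs3 : HasCompactSupport (fun w => wDzbar f w * (starRingEnd ℂ) (f w)) :=
    hcs_mul_left' hfcs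
  have hI1 : ∫ z : ℂ, wDz (fun w => q w * (f w * (starRingEnd ℂ) (f w))) z ∂volume = 0 :=
    integral_wDz_eq_zero hin1 hcs1
  have hI2 : ∫ z : ℂ, wDzbar (fun w => wDz f w * (starRingEnd ℂ) (f w)) z ∂volume = 0 :=
    integral_wDzbar_eq_zero hin2 hcs2
  have hI3 : ∫ z : ℂ, wDz (fun w => wDzbar f w * (starRingEnd ℂ) (f w)) z ∂volume = 0 :=
    integral_wDz_eq_zero hin3 hcs3
  -- pointwise identity
  have hpt : ∀ z : ℂ, ‖-wDz f z + p z * f z‖ ^ 2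
      = ‖wDzbar f z + q z * f z‖ ^ 2
        + (wDzbar (fun w => wDz f w * (starRingEnd ℂ) (f w)) z).re
        - (wDz (fun w => wDzbar f w * (starRingEnd ℂ) (f w)) z).re
        - 2 * (wDz (fun w => q w * (f w * (starRingEnd ℂ) (f w))) z).re
        + 2 * ((r z).re * ‖f z‖ ^ 2) := by
    intro z
    have e1 : wDz (fun w => q w * (f w * (starRingEnd ℂ) (f w))) z
        = r z * (f z * (starRingEnd ℂ) (f z))
          + q z * (wDz f z * (starRingEnd ℂ) (f z) + f z * (starRingEnd ℂ) (wDzbar f z)) := by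
      rw [wDz_mul (hq.differentiable (by simp) z) ((hf.mul hfc).differentiable (by simp) z),
          wDz_mul (hf.differentiable (by simp) z) (hfc.differentiable (by simp) z), wDz_conj]
    have e2 : wDzbar (fun w => wDz f w * (starRingEnd ℂ) (f w)) z
        = wDzbar (wDz f) z * (starRingEnd ℂ) (f z) + wDz f z * (starRingEnd ℂ) (wDz f z) := by
      rw [wDzbar_mul ((contDiff_wDz hf).differentiable (by simp) z)
          (hfc.differentiable (by simp) z), wDzbar_conj]
    have e3 : wDz (fun w => wDzbar f w * (starRingEnd ℂ) (f w)) z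
        = wDzbar (wDz f) z * (starRingEnd ℂ) (f z)
          + wDzbar f z * (starRingEnd ℂ) (wDzbar f z) := by
      rw [wDz_mul ((contDiff_wDzbar hf).differentiable (by simp) z)
          (hfc.differentiable (by simp) z), wDz_conj, wDzbar_wDz_comm hf z]
    rw [e1, e2, e3, hqp z]
    simp only [norm_sq_complex, Complex.add_re, Complex.add_im, Complex.sub_re, Complex.sub_im,
      Complex.mul_re, Complex.mul_im, Complex.neg_re, Complex.neg_im, Complex.conj_re,
      Complex.conj_im]
    ring
  -- integrability
  have iA : Integrable (fun z : ℂ => ‖wDzbar f z + q z * f z‖ ^ 2) volume := by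
    apply Continuous.integrable_of_hasCompactSupport
    · exact ((contDiff_wDzbar hf).continuous.add (hq.continuous.mul hf.continuous)).norm.pow 2
    · exact ((hcs_wDzbar hsupp).add (hcs_mul_left' hsupp)).comp_left
        (g := fun x : ℂ => ‖x‖ ^ 2) (by simp)
  have iB2 : Integrable
      (fun z : ℂ => (wDzbar (fun w => wDz f w * (starRingEnd ℂ) (f w)) z).re) volume := by
    apply Continuous.integrable_of_hasCompactSupport
    · exact Complex.continuous_re.comp (contDiff_wDzbar hin2).continuous
    · exact (hcs_wDzbar hcs2).comp_left (g := Complex.re) rfl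
  have iB3 : Integrable
      (fun z : ℂ => (wDz (fun w => wDzbar f w * (starRingEnd ℂ) (f w)) z).re) volume := by
    apply Continuous.integrable_of_hasCompactSupport
    · exact Complex.continuous_re.comp (contDiff_wDz hin3).continuous
    · exact (hcs_wDz hcs3).comp_left (g := Complex.re) rfl
  have iC1 : Integrable
      (fun z : ℂ => (wDz (fun w => q w * (f w * (starRingEnd ℂ) (f w))) z).re) volume := by
    apply Continuous.integrable_of_hasCompactSupport
    · exact Complex.continuous_re.comp (contDiff_wDz hin1).continuous
    · exact (hcs_wDz hcs1).comp_left (g := Complex.re) rfl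
  have iD : Integrable (fun z : ℂ => (r z).re * ‖f z‖ ^ 2) volume := by
    apply Continuous.integrable_of_hasCompactSupport
    · exact (Complex.continuous_re.comp hr.continuous).mul (hf.continuous.norm.pow 2)
    · exact hcs_mul_left' (hsupp.comp_left (g := fun x : ℂ => ‖x‖ ^ 2) (by simp))
  -- complex-valued integrability
  have iF1C : Integrable (fun z : ℂ => wDz (fun w => q w * (f w * (starRingEnd ℂ) (f w))) z)
      volume := (contDiff_wDz hin1).continuous.integrable_of_hasCompactSupport (hcs_wDz hcs1)
  have iF2C : Integrable (fun z : ℂ => wDzbar (fun w => wDz f w * (starRingEnd ℂ) (f w)) z)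
      volume :=
    (contDiff_wDzbar hin2).continuous.integrable_of_hasCompactSupport (hcs_wDzbar hcs2)
  have iF3C : Integrable (fun z : ℂ => wDz (fun w => wDzbar f w * (starRingEnd ℂ) (f w)) z)
      volume := (contDiff_wDz hin3).continuous.integrable_of_hasCompactSupport (hcs_wDz hcs3)
  -- splitting the integral
  have j1 : Integrable (fun z : ℂ => ‖wDzbar f z + q z * f z‖ ^ 2
      + (wDzbar (fun w => wDz f w * (starRingEnd ℂ) (f w)) z).re) volume := iA.add iB2
  have j2 : Integrable (fun z : ℂ => ‖wDzbar f z + q z * f z‖ ^ 2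
      + (wDzbar (fun w => wDz f w * (starRingEnd ℂ) (f w)) z).re
      - (wDz (fun w => wDzbar f w * (starRingEnd ℂ) (f w)) z).re) volume := j1.sub iB3
  have jC : Integrable
      (fun z : ℂ => 2 * (wDz (fun w => q w * (f w * (starRingEnd ℂ) (f w))) z).re) volume :=
    iC1.const_mul 2
  have j3 : Integrable (fun z : ℂ => ‖wDzbar f z + q z * f z‖ ^ 2
      + (wDzbar (fun w => wDz f w * (starRingEnd ℂ) (f w)) z).re
      - (wDz (fun w => wDzbar f w * (starRingEnd ℂ) (f w)) z).re
      - 2 * (wDz (fun w => q w * (f w * (starRingEnd ℂ) (f w))) z).re) volume := j2.sub jC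
  have j4 : Integrable (fun z : ℂ => 2 * ((r z).re * ‖f z‖ ^ 2)) volume := iD.const_mul 2
  have hsplit : ∫ z : ℂ, ‖-wDz f z + p z * f z‖ ^ 2 ∂volume
      = (∫ z : ℂ, ‖wDzbar f z + q z * f z‖ ^ 2 ∂volume)
        + (∫ z : ℂ, (wDzbar (fun w => wDz f w * (starRingEnd ℂ) (f w)) z).re ∂volume)
        - (∫ z : ℂ, (wDz (fun w => wDzbar f w * (starRingEnd ℂ) (f w)) z).re ∂volume)
        - 2 * (∫ z : ℂ, (wDz (fun w => q w * (f w * (starRingEnd ℂ) (f w))) z).re ∂volume)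
        + 2 * (∫ z : ℂ, (r z).re * ‖f z‖ ^ 2 ∂volume) := by
    rw [integral_congr_ae (Filter.Eventually.of_forall hpt)]
    rw [integral_add j3 j4, integral_sub j2 jC, integral_sub j1 iB3, integral_add iA iB2,
        integral_const_mul, integral_const_mul]
  -- the vanishing integrals
  have hz1 : ∫ z : ℂ, (wDz (fun w => q w * (f w * (starRingEnd ℂ) (f w))) z).re ∂volume = 0 := by
    have h := integral_re iF1C
    rw [hI1] at h
    simpa using h
  have hz2 : ∫ z : ℂ,
      (wDzbar (fun w => wDz f w * (starRingEnd ℂ) (f w)) z).re ∂volume = 0 := by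
    have h := integral_re iF2C
    rw [hI2] at h
    simpa using h
  have hz3 : ∫ z : ℂ, (wDz (fun w => wDzbar f w * (starRingEnd ℂ) (f w)) z).re ∂volume = 0 := by
    have h := integral_re iF3C
    rw [hI3] at h
    simpa using h
  -- conclusion
  have hA0 : 0 ≤ ∫ z : ℂ, ‖wDzbar f z + q z * f z‖ ^ 2 ∂volume :=
    integral_nonneg fun z => by positivity
  have icf2 : Integrable (fun z : ℂ => c * ‖f z‖ ^ 2) volume :=
    (Continuous.integrable_of_hasCompactSupport (f := fun z => ‖f z‖ ^ 2) (hf.continuous.norm.pow 2)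
      (hsupp.comp_left (g := fun x : ℂ => ‖x‖ ^ 2) (by simp))).const_mul c
  have hDD : c * ∫ z : ℂ, ‖f z‖ ^ 2 ∂volume ≤ ∫ z : ℂ, (r z).re * ‖f z‖ ^ 2 ∂volume := by
    rw [← integral_const_mul]
    exact integral_mono icf2 iD fun z =>
      mul_le_mul_of_nonneg_right (hcurv z) (by positivity)
  rw [hsplit, hz1, hz2, hz3]
  linarith
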